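/- For every ε ∈ (0, π) there exists a constant K > 0 such that |E(z)| = |F(z)·T(z)^{p−1}| ≤ K/(1 + |z|) for all z ∈ ℂ_ε. -/

import Mathlib

/-!
With `w = T(z)`, the equation `z w^p = w - 1` gives `(1 - p z w^(p-1)) w = p - (p-1) w`, hence
`z E(z) = (w - 1) / (p - (p-1) w)`. For `|z| ≥ 3·2^(p-1)` the equation forces `|w| ≤ 1/2`, so
`|z E(z)| ≤ 3/2`. On the bounded part of the sector, `E` is bounded by compactness: `E` is
continuous on `Ω_p`, and the closure of the sector (which contains `0`) still avoids `[R_p, ∞)`.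
-/

open Filter Topology Set

/-- `R_p = (p-1)^(p-1) / p^p`. -/
noncomputable def Rp (p : ℕ) : ℝ :=
  ((p - 1 : ℕ) : ℝ) ^ (p - 1) / (p : ℝ) ^ p

/-- The cut plane `Ω_p = ℂ ∖ [R_p, ∞)`. -/
noncomputable def cutPlane (p : ℕ) : Set ℂ :=
  (Complex.ofReal '' Set.Ici (Rp p))ᶜ

/-- The open sector `ℂ_ε = {z : |arg z| > ε}` (principal argument). -/
def sector (ε : ℝ) : Set ℂ := {z : ℂ | ε < |Complex.arg z|}

/-- `E(z) = T(z)^{p-1} F(z)` as a function of `z` and of the value `w = T(z)`. -/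
noncomputable def fussCatalanE (p : ℕ) (z w : ℂ) : ℂ :=
  w ^ (p - 1) * (1 - (p : ℂ) * z * w ^ (p - 1))⁻¹

lemma Rp_pos (p : ℕ) : 0 < Rp p := by
  unfold Rp
  rcases Nat.lt_or_ge p 2 with hp | hp
  · interval_cases p <;> norm_num
  · have : (0 : ℝ) < ((p - 1 : ℕ) : ℝ) := by exact_mod_cast (by omega : 0 < p - 1)
    positivity

lemma ofReal_notMem_closure_sector {ε x : ℝ} (hε : 0 < ε) (hx : 0 < x) :
    (x : ℂ) ∉ closure (sector ε) := by
  have hnear : ∀ᶠ w in 𝓝 (x : ℂ), |Complex.arg w| < ε := by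
    have := (Complex.continuousAt_arg (Complex.ofReal_mem_slitPlane.2 hx)).abs
    rw [ContinuousAt, Complex.arg_ofReal_of_nonneg hx.le, abs_zero] at this
    exact this.eventually_lt_const hε
  rw [mem_closure_iff_frequently, not_frequently]
  exact hnear.mono fun w hw hws => lt_asymm hw hws

lemma closure_sector_subset_cutPlane (p : ℕ) {ε : ℝ} (hε : 0 < ε) :
    closure (sector ε) ⊆ cutPlane p := by
  rintro z hz ⟨x, hx, rfl⟩
  exact ofReal_notMem_closure_sector hε ((Rp_pos p).trans_le hx) hz

section Root

variable {p : ℕ} {z w : ℂ}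

lemma ne_zero_of_root (hp : p ≠ 0) (h : z * w ^ p - w + 1 = 0) : w ≠ 0 := by
  rintro rfl
  simp [zero_pow hp] at h

lemma mul_fussCatalanE_of_root (hp : 1 ≤ p) (h : z * w ^ p - w + 1 = 0) :
    z * fussCatalanE p z w = (w - 1) / (p - (p - 1) * w) := by
  have hw := ne_zero_of_root (by omega) h
  have hpow : w ^ (p - 1) * w = w ^ p := pow_sub_one_mul (by omega) w
  have hden : (1 - (p : ℂ) * z * w ^ (p - 1)) * w = p - (p - 1) * w := by
    linear_combination (-(p : ℂ)) * h - (p : ℂ) * z * hpow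
  rw [← hden, show w - 1 = z * w ^ (p - 1) * w by linear_combination -h - z * hpow,
    mul_div_mul_right _ _ hw, fussCatalanE]
  ring

lemma norm_le_half_of_root (hp : 1 ≤ p) (h : z * w ^ p - w + 1 = 0)
    (hz : 3 * 2 ^ (p - 1) ≤ ‖z‖) : ‖w‖ ≤ 1 / 2 := by
  by_contra! hw
  have hnorm : ‖z‖ * ‖w‖ ^ (p - 1) * ‖w‖ = ‖w - 1‖ := by
    rw [← norm_pow, ← norm_mul, ← norm_mul, mul_assoc, pow_sub_one_mul (by omega)]
    congr 1
    linear_combination h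
  have hlt : ‖w - 1‖ < 3 * ‖w‖ := by linarith [norm_sub_le w 1, norm_one (α := ℂ)]
  have hge : 3 ≤ ‖z‖ * ‖w‖ ^ (p - 1) :=
    calc (3 : ℝ) = 3 * 2 ^ (p - 1) * (1 / 2) ^ (p - 1) := by
          rw [mul_assoc, ← mul_pow]; norm_num
      _ ≤ ‖z‖ * ‖w‖ ^ (p - 1) := by gcongr
  nlinarith

lemma norm_fussCatalanE_le_of_root (hp : 1 ≤ p) (h : z * w ^ p - w + 1 = 0)
    (hz : 3 * 2 ^ (p - 1) ≤ ‖z‖) : ‖fussCatalanE p z w‖ ≤ 3 / (1 + ‖z‖) := by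
  have hw := norm_le_half_of_root hp h hz
  have hz1 : 1 ≤ ‖z‖ := by linarith [one_le_pow₀ (M₀ := ℝ) (n := p - 1) one_le_two]
  have hnum : ‖w - 1‖ ≤ 3 / 2 := by linarith [norm_sub_le w 1, norm_one (α := ℂ)]
  have hden : 1 ≤ ‖(p : ℂ) - (p - 1) * w‖ := by
    have hp1 : ‖(p : ℂ) - 1‖ = (p : ℝ) - 1 := by
      rw [← Nat.cast_pred (by omega), Complex.norm_natCast, Nat.cast_pred (by omega)]
    have hp1' : (1 : ℝ) ≤ p := by exact_mod_cast hp
    calc (1 : ℝ) ≤ p - (p - 1) * (1 / 2) := by linarith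
      _ ≤ ‖(p : ℂ)‖ - ‖((p : ℂ) - 1) * w‖ := by
          rw [Complex.norm_natCast, norm_mul, hp1]; gcongr
      _ ≤ ‖(p : ℂ) - (p - 1) * w‖ := norm_sub_norm_le _ _
  have hzE : ‖z‖ * ‖fussCatalanE p z w‖ ≤ 3 / 2 := by
    rw [← norm_mul, mul_fussCatalanE_of_root hp h, norm_div]
    exact (div_le_self (norm_nonneg _) hden).trans hnum
  rw [le_div_iff₀ (by positivity)]
  nlinarith [norm_nonneg (fussCatalanE p z w)]

end Root

lemma ContinuousOn.fussCatalanE {p : ℕ} {T : ℂ → ℂ} {s : Set ℂ} (hT : ContinuousOn T s)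
    (hne : ∀ z ∈ s, 1 - (p : ℂ) * z * T z ^ (p - 1) ≠ 0) :
    ContinuousOn (fun z => fussCatalanE p z (T z)) s :=
  (hT.pow _).mul <|
    (continuousOn_const.sub ((continuousOn_const.mul continuousOn_id).mul (hT.pow _))).inv₀ hne

lemma exists_pos_bound_div_one_add_norm {E F : Type*} [SeminormedAddCommGroup E]
    [SeminormedAddCommGroup F] {f : E → F} {s : Set E} {R M C : ℝ}
    (hsmall : ∀ z ∈ s, ‖z‖ ≤ R → ‖f z‖ ≤ M)
    (hlarge : ∀ z ∈ s, R ≤ ‖z‖ → ‖f z‖ ≤ C / (1 + ‖z‖)) :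
    ∃ K, 0 < K ∧ ∀ z ∈ s, ‖f z‖ ≤ K / (1 + ‖z‖) := by
  refine ⟨max (M * (1 + R)) (max C 1), by positivity, fun z hz => ?_⟩
  rcases le_total ‖z‖ R with hzR | hzR
  · have hM := hsmall z hz hzR
    rw [le_div_iff₀ (by positivity)]
    calc ‖f z‖ * (1 + ‖z‖) ≤ M * (1 + R) := by
          gcongr
          exact (norm_nonneg _).trans hM
      _ ≤ _ := le_max_left _ _
  · exact (hlarge z hz hzR).trans (by gcongr; exact le_max_of_le_right (le_max_left _ _))

/-- Let `T` be analytic on `Ω_p` with `z T(z)^p − T(z) + 1 = 0` and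
`1 − p z T(z)^{p−1} ≠ 0` there; set `F(z) = 1/(1 − p z T(z)^{p−1})` and
`E(z) = T(z)^{p−1} F(z)`.  Then for every `ε ∈ (0, π)` there is `K > 0` with
`|E(z)| ≤ K/(1 + |z|)` for all `z ∈ ℂ_ε`. -/
theorem fussCatalan_E_decay (p : ℕ) (hp : 2 ≤ p) (T : ℂ → ℂ)
    (hT : AnalyticOnNhd ℂ T (cutPlane p))
    (heq : ∀ z ∈ cutPlane p, z * T z ^ p - T z + 1 = 0)
    (hne : ∀ z ∈ cutPlane p, 1 - (p : ℂ) * z * T z ^ (p - 1) ≠ 0)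
    (ε : ℝ) (hε : ε ∈ Set.Ioo 0 Real.pi) :
    ∃ K : ℝ, 0 < K ∧ ∀ z ∈ sector ε,
      ‖T z ^ (p - 1) * (1 - (p : ℂ) * z * T z ^ (p - 1))⁻¹‖ ≤ K / (1 + ‖z‖) := by
  have hclosure := closure_sector_subset_cutPlane p hε.1
  obtain ⟨M, hM⟩ :=
    ((isCompact_closedBall (0 : ℂ) (3 * 2 ^ (p - 1))).inter_right isClosed_closure
      ).exists_bound_of_continuousOn
      ((hT.continuousOn.fussCatalanE hne).mono (inter_subset_right.trans hclosure))
  refine exists_pos_bound_div_one_add_norm (f := fun z => fussCatalanE p z (T z))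
    (R := 3 * 2 ^ (p - 1)) (M := M) (C := 3) ?_ ?_
  · exact fun z hz hzR => hM z ⟨mem_closedBall_zero_iff.2 hzR, subset_closure hz⟩
  · exact fun z hz hzR =>
      norm_fussCatalanE_le_of_root (by omega) (heq z (hclosure (subset_closure hz))) hzR
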